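/- Let d ∈ ℕ. The matrix p_{mub,d}, indexed by [d+1]×[d] (so N = d(d+1)), is a matricially spanning quantum correlation of dimension d if and only if there exist d+1 projection-valued measures {P_{1,i}}_{i=1}^{d}, …, {P_{d+1,i}}_{i=1}^{d} in M_d(ℂ) whose corresponding bases are mutually unbiased, i.e., each P_{x,i} is a rank-one projection with ∑_{i=1}^{d} P_{x,i} = I_d for every x ∈ [d+1], and Tr(P_{x,i} P_{y,j}) = 1/d whenever x ≠ y. -/

import Mathlib

/-- `p` is a matricially spanning quantum correlation of dimension `d` (with question set
indexed by `ι`): there are projections `P_x ∈ M_d(ℂ)`, `x ∈ ι`, spanning `M_d(ℂ)` with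
`p x y = (1/d)·Tr(P_x P_y)`. -/
def IsMatSpanning (ι : Type) (d : ℕ) (p : ι → ι → ℂ) : Prop :=
  ∃ P : ι → Matrix (Fin d) (Fin d) ℂ,
    (∀ x, (P x).IsHermitian ∧ P x * P x = P x) ∧
    Submodule.span ℂ (Set.range P) = ⊤ ∧
    (∀ x y, p x y = (1 / (d : ℂ)) * (P x * P y).trace)

/-- The correlation `p_{mub,d}` on `([d+1]×[d]) × ([d+1]×[d])`: `1/d` if `(x,i) = (y,j)`,
`0` if `x = y` and `i ≠ j`, and `1/d²` if `x ≠ y`. -/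
noncomputable def pMUB (d : ℕ) : (Fin (d + 1) × Fin d) → (Fin (d + 1) × Fin d) → ℂ :=
  fun a b => if a = b then 1 / (d : ℂ) else if a.1 = b.1 then 0 else 1 / (d : ℂ) ^ 2

/-!
For projections the trace pairing is `Tr(PQ) = ‖QP‖²_HS ≥ 0`, with equality only if `PQ = 0`.
Hence `Tr(P_{x,i} P_{x,j}) = 0` forces the projections of one question to be orthogonal, and
conversely a family of projections summing to `1` is orthogonal; a rank-one projection has
trace `1`, so `d` orthogonal ones sum to `1`. This translates `p_{mub,d}` into `d + 1` mutually
unbiased projection-valued measures and back. For spanning, `1` together with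
`P_{x,i} - 1/d` (`i < d - 1`) are `1 + (d+1)(d-1) = d²` matrices, and they are linearly
independent because the trace pairing against `1` and `P_{x,i} - P_{x,d-1}` is diagonal with
nonzero entries.
-/

open Matrix
open scoped ComplexOrder

theorem LinearIndependent.of_pairing {R M ι : Type*} [CommRing R] [NoZeroDivisors R]
    [AddCommGroup M] [Module R M] [Fintype ι] {v : ι → M} (f : ι → M →ₗ[R] R)
    (hdiag : ∀ i, f i (v i) ≠ 0) (hoff : Pairwise fun i j => f i (v j) = 0) :
    LinearIndependent R v := by
  classical
  refine Fintype.linearIndependent_iff.mpr fun g hg i => ?_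
  have h := congrArg (f i) hg
  rw [map_sum, map_zero, Finset.sum_eq_single i (fun j _ hji => by simp [hoff hji.symm])
    (by simp)] at h
  simpa [hdiag i] using h

section Idempotent

variable {K n : Type*} [Field K] [Fintype n] [DecidableEq n]

theorem Matrix.trace_eq_rank_of_isIdempotentElem {A : Matrix n n K} (hA : IsIdempotentElem A) :
    A.trace = A.rank := by
  have hA' : IsIdempotentElem (toLin' A) := hA.map toLinAlgEquiv'
  rw [← trace_toLin'_eq, ((LinearMap.isProj_range_iff_isIdempotentElem _).mpr hA').trace, rank,
    toLin'_apply']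

theorem Matrix.eq_zero_of_isIdempotentElem_of_trace_eq_zero [CharZero K] {A : Matrix n n K}
    (hA : IsIdempotentElem A) (h : A.trace = 0) : A = 0 := by
  have hA' : IsIdempotentElem (toLin' A) := hA.map toLinAlgEquiv'
  rw [← trace_toLin'_eq, LinearMap.IsIdempotentElem.trace_eq_zero_iff hA'] at h
  exact toLin'.injective (by simpa using h)

theorem OrthogonalIdempotents.sum_eq_one_of_sum_trace_eq_card [CharZero K] {ι : Type*}
    [Fintype ι] {e : ι → Matrix n n K} (he : OrthogonalIdempotents e)
    (htr : ∑ i, (e i).trace = Fintype.card n) : ∑ i, e i = 1 := by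
  have hidem : IsIdempotentElem (1 - ∑ i, e i) := he.isIdempotentElem_sum.one_sub
  refine (sub_eq_zero.mp (eq_zero_of_isIdempotentElem_of_trace_eq_zero hidem ?_)).symm
  rw [trace_sub, trace_one, trace_sum, htr, sub_self]

end Idempotent

section StarProjection

variable {𝕜 n : Type*} [RCLike 𝕜] [Fintype n] {P Q : Matrix n n 𝕜}

theorem IsStarProjection.trace_mul_eq (hP : IsStarProjection P) (hQ : IsStarProjection Q) :
    (P * Q).trace = ((Q * P)ᴴ * (Q * P)).trace := by
  have hPQ : P * Q * (Q * P) = P * Q * P := by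
    rw [mul_assoc, ← mul_assoc Q, hQ.isIdempotentElem.eq, mul_assoc]
  rw [conjTranspose_mul, hP.isSelfAdjoint.isHermitian.eq, hQ.isSelfAdjoint.isHermitian.eq, hPQ,
    trace_mul_cycle, hP.isIdempotentElem.eq]

theorem IsStarProjection.trace_mul_nonneg (hP : IsStarProjection P) (hQ : IsStarProjection Q) :
    0 ≤ (P * Q).trace :=
  hP.trace_mul_eq hQ ▸ (posSemidef_conjTranspose_mul_self _).trace_nonneg

theorem IsStarProjection.mul_eq_zero_of_trace_mul_eq_zero (hP : IsStarProjection P)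
    (hQ : IsStarProjection Q) (h : (P * Q).trace = 0) : P * Q = 0 := by
  rw [hP.trace_mul_eq hQ, trace_conjTranspose_mul_self_eq_zero_iff] at h
  rw [← hP.isSelfAdjoint.star_eq, ← hQ.isSelfAdjoint.star_eq, ← star_mul, h, star_zero]

theorem Matrix.orthogonalIdempotents_of_sum_eq_one [DecidableEq n] {ι : Type*} [Fintype ι]
    [DecidableEq ι] {e : ι → Matrix n n 𝕜} (he : ∀ i, IsStarProjection (e i))
    (hsum : ∑ i, e i = 1) : OrthogonalIdempotents e := by
  refine ⟨fun i => (he i).isIdempotentElem, fun i j hij => ?_⟩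
  have htr : ∑ k ∈ Finset.univ.erase i, (e i * e k).trace = 0 := by
    have h := congrArg (fun A => (e i * A).trace) hsum
    simp only [Finset.mul_sum, trace_sum, mul_one] at h
    rwa [← Finset.add_sum_erase _ _ (Finset.mem_univ i), (he i).isIdempotentElem.eq,
      add_eq_left] at h
  refine (he i).mul_eq_zero_of_trace_mul_eq_zero (he j) ?_
  exact (Finset.sum_eq_zero_iff_of_nonneg fun k _ => (he i).trace_mul_nonneg (he k)).mp htr j
    (Finset.mem_erase.mpr ⟨hij.symm, Finset.mem_univ j⟩)

end StarProjection

theorem span_eq_top_of_trace_mul_eq {K : Type*} [Field K] [CharZero K] {n : ℕ}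
    {P : Fin (n + 2) → Fin (n + 1) → Matrix (Fin (n + 1)) (Fin (n + 1)) K}
    (hsum : ∀ x, ∑ i, P x i = 1) (htr : ∀ x i, (P x i).trace = 1)
    (hT : ∀ x y i j, (P x i * P y j).trace =
      if x = y then if i = j then 1 else 0 else 1 / ((n : K) + 1)) :
    Submodule.span K (Set.range fun a : Fin (n + 2) × Fin (n + 1) => P a.1 a.2) = ⊤ := by
  set c : K := 1 / ((n : K) + 1)
  have hc : c * ((n : K) + 1) = 1 := one_div_mul_cancel (Nat.cast_add_one_ne_zero n)
  let v : Option (Fin (n + 2) × Fin n) → Matrix (Fin (n + 1)) (Fin (n + 1)) K :=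
    fun o => o.elim 1 fun a => P a.1 a.2.castSucc - c • 1
  let w : Option (Fin (n + 2) × Fin n) → Matrix (Fin (n + 1)) (Fin (n + 1)) K :=
    fun o => o.elim 1 fun a => P a.1 a.2.castSucc - P a.1 (Fin.last n)
  have hvw : ∀ o o', (v o * w o').trace =
      if o = o' then (if o = none then (n : K) + 1 else 1) else 0 := by
    rintro (_ | ⟨x, i⟩) (_ | ⟨y, j⟩)
    · simp [v, w]
    · simp [v, w, htr]
    · simp [v, w, htr, hc]
    · simp only [v, w, Option.elim_some, sub_mul, mul_sub, trace_sub, smul_mul_assoc, one_mul,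
        trace_smul, htr, hT, if_neg (Fin.castSucc_ne_last i),
        Fin.castSucc_inj, Option.some.injEq, Prod.mk.injEq, reduceCtorEq, if_false]
      by_cases hxy : x = y <;> simp [hxy]
  have hv : LinearIndependent K v := by
    refine .of_pairing (fun o => traceLinearMap _ K K ∘ₗ LinearMap.mulRight K (w o)) ?_ ?_
    · rintro (_ | a) <;> simp [hvw, Nat.cast_add_one_ne_zero]
    · intro o o' h
      simp [hvw, Ne.symm h]
  have hspan : Submodule.span K (Set.range v) = ⊤ :=
    hv.span_eq_top_of_card_eq_finrank (by simp [Module.finrank_matrix]; ring)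
  have hone : (1 : Matrix (Fin (n + 1)) (Fin (n + 1)) K) ∈
      Submodule.span K (Set.range fun a : Fin (n + 2) × Fin (n + 1) => P a.1 a.2) := by
    rw [← hsum 0]
    exact Submodule.sum_mem _ fun i _ => Submodule.subset_span ⟨(0, i), rfl⟩
  rw [eq_top_iff, ← hspan, Submodule.span_le]
  rintro _ ⟨_ | ⟨x, i⟩, rfl⟩
  · exact hone
  · exact Submodule.sub_mem _ (Submodule.subset_span ⟨(x, i.castSucc), rfl⟩)
      (Submodule.smul_mem _ _ hone)

theorem span_eq_top_of_mutuallyUnbiased {K : Type*} [Field K] [CharZero K] {d : ℕ}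
    {P : Fin (d + 1) → Fin d → Matrix (Fin d) (Fin d) K}
    (hP : ∀ x, CompleteOrthogonalIdempotents (P x)) (htr : ∀ x i, (P x i).trace = 1)
    (hcross : ∀ x y i j, x ≠ y → (P x i * P y j).trace = 1 / (d : K)) :
    Submodule.span K (Set.range fun a : Fin (d + 1) × Fin d => P a.1 a.2) = ⊤ := by
  obtain _ | n := d
  · exact Subsingleton.elim _ _
  refine span_eq_top_of_trace_mul_eq (fun x => (hP x).complete) htr fun x y i j => ?_
  split_ifs with hxy hij
  · rw [hxy, hij, (hP y).idem j, htr]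
  · rw [hxy, (hP y).ortho hij, trace_zero]
  · exact_mod_cast hcross x y i j hxy

theorem pMUB_eq_one_div_mul_iff {d : ℕ} (T : Fin (d + 1) × Fin d → Fin (d + 1) × Fin d → ℂ) :
    (∀ a b, pMUB d a b = 1 / d * T a b) ↔
      ∀ a b, T a b = if a = b then (1 : ℂ) else if a.1 = b.1 then 0 else 1 / d := by
  refine forall₂_congr fun a b => ?_
  have hd : (d : ℂ) ≠ 0 := Nat.cast_ne_zero.mpr a.2.pos.ne'
  have hval : (if a = b then (1 : ℂ) else if a.1 = b.1 then 0 else 1 / (d : ℂ)) =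
      pMUB d a b * d := by
    unfold pMUB
    split_ifs <;> simp [field, sq]
  rw [hval, eq_comm, one_div_mul_eq_div, div_eq_iff hd, eq_comm]

/-- `p_{mub,d}` is a matricially spanning quantum correlation of dimension
`d` if and only if there exist `d+1` projection-valued measures `{P_{x,i}}_{i=1}^d` in
`M_d(ℂ)` whose corresponding bases are mutually unbiased: each `P_{x,i}` is a rank-one
projection, `∑_i P_{x,i} = I_d` for every `x`, and `Tr(P_{x,i} P_{y,j}) = 1/d` whenever
`x ≠ y`. -/
theorem stmt14 (d : ℕ) :
    IsMatSpanning (Fin (d + 1) × Fin d) d (pMUB d) ↔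
      ∃ P : Fin (d + 1) → Fin d → Matrix (Fin d) (Fin d) ℂ,
        (∀ x i, (P x i).IsHermitian ∧ P x i * P x i = P x i ∧ (P x i).rank = 1) ∧
        (∀ x, ∑ i, P x i = 1) ∧
        (∀ x y i j, x ≠ y → (P x i * P y j).trace = 1 / (d : ℂ)) := by
  have hrank {A : Matrix (Fin d) (Fin d) ℂ} (hA : IsIdempotentElem A) :
      A.rank = 1 ↔ A.trace = 1 := by
    rw [trace_eq_rank_of_isIdempotentElem hA, Nat.cast_eq_one]
  constructor
  · rintro ⟨P, hP, -, hp⟩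
    have hT := (pMUB_eq_one_div_mul_iff _).mp hp
    have htr (a) : (P a).trace = 1 := by simpa [(hP a).2] using hT a a
    have horth (x) : OrthogonalIdempotents fun i => P (x, i) :=
      ⟨fun i => (hP _).2, fun i j hij => IsStarProjection.mul_eq_zero_of_trace_mul_eq_zero
        ⟨(hP _).2, (hP _).1⟩ ⟨(hP _).2, (hP _).1⟩ (by simpa [hij] using hT (x, i) (x, j))⟩
    exact ⟨fun x i => P (x, i), fun x i => ⟨(hP _).1, (hP _).2, (hrank (hP _).2).mpr (htr _)⟩,
      fun x => (horth x).sum_eq_one_of_sum_trace_eq_card (by simp [htr]),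
      fun x y i j hxy => by simpa [hxy] using hT (x, i) (y, j)⟩
  · rintro ⟨P, hP, hsum, hcross⟩
    have htr (x i) : (P x i).trace = 1 := (hrank (hP x i).2.1).mp (hP x i).2.2
    have hPVM (x) : CompleteOrthogonalIdempotents (P x) :=
      ⟨orthogonalIdempotents_of_sum_eq_one (fun i => ⟨(hP x i).2.1, (hP x i).1⟩) (hsum x), hsum x⟩
    refine ⟨fun a => P a.1 a.2, fun a => ⟨(hP _ _).1, (hP _ _).2.1⟩,
      span_eq_top_of_mutuallyUnbiased hPVM htr hcross, (pMUB_eq_one_div_mul_iff _).mpr ?_⟩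
    rintro ⟨x, i⟩ ⟨y, j⟩
    by_cases hxy : x = y
    · subst hxy
      by_cases hij : i = j <;> simp [(hPVM x).mul_eq, hij, htr]
    · simp [hxy, hcross x y i j hxy]
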